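/- arXiv:1911.03767 — 4 statements merged into one kernel-verified Lean document; each statement's English description precedes it below -/
import Mathlib

section
/- Let X be a 2-dimensional real Banach space whose unit sphere admits a continuously differentiable natural parameterization r : ℝ → S_X, and let [a,b] ⊆ ℝ be a closed interval with r([a,b]) ≠ S_X. Then the restriction of r to [a,b] is an isometry of [a,b] onto the arc r([a,b]) equipped with its intrinsic distance d̆ induced by the norm metric; that is, d̆(r(x), r(y)) = |x − y| for all x, y ∈ [a,b]. -/
noncomputable section
open MeasureTheory Set Filter
open scoped ENNReal Topology

variable {X : Type*} [NormedAddCommGroup X] [NormedSpace ℝ X]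

/-- `e^{it} = cos t • e₁ + sin t • e₂` for the basis `b 0, b 1`. -/
def expV (b : Module.Basis (Fin 2) ℝ X) (t : ℝ) : X :=
  Real.cos t • b 0 + Real.sin t • b 1

/-- The polar parameterization `p(t) = e^{it}/‖e^{it}‖` of the unit sphere. -/
def polarParam (b : Module.Basis (Fin 2) ℝ X) (t : ℝ) : X :=
  ‖expV b t‖⁻¹ • expV b t

/-- The Euclidean norm `|x| = √(e₁*(x)² + e₂*(x)²)` associated to the basis. -/
def euclNorm (b : Module.Basis (Fin 2) ℝ X) (x : X) : ℝ :=
  Real.sqrt ((b.coord 0 x)^2 + (b.coord 1 x)^2)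

/-- `c = min{‖x‖ : |x| = 1}`. -/
def cConst (b : Module.Basis (Fin 2) ℝ X) : ℝ :=
  sInf (norm '' {x : X | euclNorm b x = 1})

/-- `C = max{‖x‖ : |x| = 1}`. -/
def CConst (b : Module.Basis (Fin 2) ℝ X) : ℝ :=
  sSup (norm '' {x : X | euclNorm b x = 1})

/-- The right derivative of a function `f : ℝ → X`. -/
def rightDeriv (f : ℝ → X) (t : ℝ) : X := derivWithin f (Ici t) t

/-- The left derivative of a function `f : ℝ → X`. -/
def leftDeriv (f : ℝ → X) (t : ℝ) : X := derivWithin f (Iic t) t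

/-- The arc-length function `s(t) = ∫₀^t ‖p'₊(u)‖ du`. -/
def arcLen (b : Module.Basis (Fin 2) ℝ X) (t : ℝ) : ℝ :=
  ∫ u in (0:ℝ)..t, ‖rightDeriv (polarParam b) u‖

/-- The half-length `L = s(π)` of the unit sphere. -/
def halfLen (b : Module.Basis (Fin 2) ℝ X) : ℝ := arcLen b Real.pi

/-- The inverse `t = s⁻¹` of the arc-length function. -/
def arcInv (b : Module.Basis (Fin 2) ℝ X) : ℝ → ℝ := Function.invFun (arcLen b)

/-- The natural parameterization `r = p ∘ t` of the unit sphere. -/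
def natParam (b : Module.Basis (Fin 2) ℝ X) : ℝ → X := polarParam b ∘ arcInv b

/-- Local absolute continuity of `f` with a.e. derivative `f'`, in the sense that `f` is
differentiable almost everywhere, `f'` is locally integrable, and `f` is recovered from `f'`
by integration. -/
def LocAC {E : Type*} [NormedAddCommGroup E] [NormedSpace ℝ E] [CompleteSpace E]
    (f f' : ℝ → E) : Prop :=
  (∀ᵐ t : ℝ, HasDerivAt f (f' t) t) ∧ LocallyIntegrable f' volume ∧
    ∀ a b : ℝ, a ≤ b → f b - f a = ∫ t in a..b, f' t

/-- `s` is a Lebesgue point of `g`. -/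
def LebesguePoint {E : Type*} [NormedAddCommGroup E] (g : ℝ → E) (s : ℝ) : Prop :=
  Tendsto (fun ε : ℝ => (1/ε) * ∫ t in (0:ℝ)..ε, ‖g (s + t) - g s‖) (𝓝[≠] (0:ℝ)) (𝓝 0)


/-- `d̆_ε(x,y)`: the infimum of lengths of `ε`-chains in `M` from `x` to `y` (with `inf ∅ = ∞`). -/
def chainDist {E : Type*} [NormedAddCommGroup E] (M : Set E) (ε : ℝ) (x y : E) : ℝ≥0∞ :=
  ⨅ (n : ℕ) (c : Fin (n+1) → E) (_ : ∀ i, c i ∈ M) (_ : c 0 = x)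
    (_ : c (Fin.last n) = y) (_ : ∀ i : Fin n, dist (c i.castSucc) (c i.succ) < ε),
    ∑ i : Fin n, ENNReal.ofReal (dist (c i.castSucc) (c i.succ))

/-- The intrinsic distance `d̆(x,y) = sup_{ε>0} d̆_ε(x,y)` of the set `M`. -/
def intrinsicDist {E : Type*} [NormedAddCommGroup E] (M : Set E) (x y : E) : ℝ≥0∞ :=
  ⨆ (ε : ℝ) (_ : 0 < ε), chainDist M ε x y

/-!
If `r` is `1`-Lipschitz, uniform subdivisions of `[x, y]` give `ε`-chains of length at most
`|x - y|`. Conversely, `r` is injective on `[a, b]`: in complex coordinates rotated so that a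
point of the sphere missed by the arc lies on the negative real axis, the argument of `r` is a
differentiable function with derivative `Im (r' / r)`, which never vanishes because the velocity
of a unit-speed curve on the sphere is never parallel to its position; by Darboux it is strictly
monotone.
By compactness, points of the arc that are `ε`-close then have `η`-close parameters, and there the
`C¹` unit-speed condition gives `‖r u - r v‖ ≥ (1 - δ) |u - v|`. Summing along any `ε`-chain gives
`d̆_ε(r x, r y) ≥ (1 - δ) |x - y|`.
-/

theorem dist_zero_last_le_sum_dist {α : Type*} [PseudoMetricSpace α] :
    ∀ (n : ℕ) (t : Fin (n + 1) → α),
      dist (t 0) (t (Fin.last n)) ≤ ∑ i : Fin n, dist (t i.castSucc) (t i.succ)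
  | 0, _ => by simp
  | n + 1, t => by
    rw [Fin.sum_univ_castSucc, ← Fin.succ_last]
    refine (dist_triangle _ (t (Fin.last n).castSucc) _).trans ?_
    gcongr
    exact dist_zero_last_le_sum_dist n (t ∘ Fin.castSucc)

theorem IsCompact.exists_pos_forall_dist_lt_of_injOn {α β : Type*} [PseudoMetricSpace α]
    [MetricSpace β] {f : α → β} {K : Set α} (hK : IsCompact K) (hf : ContinuousOn f K)
    (hinj : InjOn f K) {η : ℝ} (hη : 0 < η) :
    ∃ ε > 0, ∀ u ∈ K, ∀ v ∈ K, dist (f u) (f v) < ε → dist u v < η := by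
  set L := K ×ˢ K ∩ {q : α × α | η ≤ dist q.1 q.2}
  have hL : IsCompact L := (hK.prod hK).inter_right (isClosed_le continuous_const continuous_dist)
  have hcont : ContinuousOn (fun q : α × α => dist (f q.1) (f q.2)) L :=
    (continuous_dist.comp_continuousOn (hf.prodMap hf)).mono inter_subset_left
  have hpos : ∀ q ∈ L, 0 < dist (f q.1) (f q.2) := fun q hq =>
    dist_pos.2 fun h => (hη.trans_le hq.2).ne' (by rw [hinj hq.1.1 hq.1.2 h, dist_self])
  obtain ⟨ε, hε, hεL⟩ := hL.exists_forall_le' hcont hpos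
  exact ⟨ε, hε, fun u hu v hv huv => not_le.1 fun h => (hεL (u, v) ⟨⟨hu, hv⟩, h⟩).not_gt huv⟩

section Chains

variable {E : Type*} [NormedAddCommGroup E]

theorem chainDist_le_sum {M : Set E} {ε : ℝ} {n : ℕ} {c : Fin (n + 1) → E} (hM : ∀ i, c i ∈ M)
    (hlink : ∀ i : Fin n, dist (c i.castSucc) (c i.succ) < ε) :
    chainDist M ε (c 0) (c (Fin.last n)) ≤
      ∑ i : Fin n, ENNReal.ofReal (dist (c i.castSucc) (c i.succ)) :=
  iInf_le_of_le n <| iInf_le_of_le c <| iInf_le_of_le hM <| iInf_le_of_le rfl <|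
    iInf_le_of_le rfl <| iInf_le_of_le hlink le_rfl

theorem chainDist_image_le_of_lipschitzOnWith {F : Type*} [NormedAddCommGroup F]
    [NormedSpace ℝ F] {f : F → E} {s : Set F} {K : NNReal} (hs : Convex ℝ s)
    (hf : LipschitzOnWith K f s) {x y : F} (hx : x ∈ s) (hy : y ∈ s) {ε : ℝ} (hε : 0 < ε) :
    chainDist (f '' s) ε (f x) (f y) ≤ ENNReal.ofReal (K * dist x y) := by
  obtain ⟨n, hn⟩ := exists_nat_gt (K * dist x y / ε)
  have hn0 : (0 : ℝ) < n := lt_of_le_of_lt (by positivity) hn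
  set p : Fin (n + 1) → F := fun i => AffineMap.lineMap x y ((i : ℝ) / n)
  have hp : ∀ i, p i ∈ s := fun i => hs.lineMap_mem hx hy
    ⟨by positivity, div_le_one_of_le₀ (mod_cast i.is_le) hn0.le⟩
  have hlink : ∀ i : Fin n, dist (f (p i.castSucc)) (f (p i.succ)) ≤ K * dist x y / n := by
    intro i
    refine (hf.dist_le_mul _ (hp _) _ (hp _)).trans_eq ?_
    simp only [p, dist_lineMap_lineMap, Fin.val_castSucc, Fin.val_succ, Real.dist_eq]
    rw [show (i : ℝ) / n - ((i + 1 : ℕ) : ℝ) / n = -(1 / n) by push_cast; ring, abs_neg,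
      abs_of_pos (by positivity)]
    ring
  have h0 : f (p 0) = f x := by simp [p]
  have hlast : f (p (Fin.last n)) = f y := by simp [p, hn0.ne']
  rw [← h0, ← hlast]
  refine (chainDist_le_sum (c := f ∘ p) (fun i => mem_image_of_mem f (hp i)) fun i =>
    (hlink i).trans_lt ((div_lt_iff₀ hn0).2 ?_)).trans ?_
  · rw [div_lt_iff₀ hε] at hn
    linarith
  rw [← ENNReal.ofReal_sum_of_nonneg fun i _ => dist_nonneg]
  refine ENNReal.ofReal_le_ofReal ((Finset.sum_le_sum fun i _ => hlink i).trans_eq ?_)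
  simp [mul_div_cancel₀ _ hn0.ne']

theorem intrinsicDist_image_le_of_lipschitzOnWith {F : Type*} [NormedAddCommGroup F]
    [NormedSpace ℝ F] {f : F → E} {s : Set F} {K : NNReal} (hs : Convex ℝ s)
    (hf : LipschitzOnWith K f s) {x y : F} (hx : x ∈ s) (hy : y ∈ s) :
    intrinsicDist (f '' s) (f x) (f y) ≤ ENNReal.ofReal (K * dist x y) :=
  iSup₂_le fun _ hε => chainDist_image_le_of_lipschitzOnWith hs hf hx hy hε

theorem ofReal_mul_dist_le_chainDist {α : Type*} [PseudoMetricSpace α] {f : α → E} {s : Set α}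
    {c ε : ℝ} (hc : 0 ≤ c) (hinj : InjOn f s)
    (hf : ∀ u ∈ s, ∀ v ∈ s, dist (f u) (f v) < ε → c * dist u v ≤ dist (f u) (f v))
    {x y : α} (hx : x ∈ s) (hy : y ∈ s) :
    ENNReal.ofReal (c * dist x y) ≤ chainDist (f '' s) ε (f x) (f y) := by
  simp only [chainDist, le_iInf_iff]
  intro n p hp hp0 hplast hlink
  choose t hts hft using hp
  have ht0 : t 0 = x := hinj (hts 0) hx (by rw [hft, hp0])
  have htlast : t (Fin.last n) = y := hinj (hts _) hy (by rw [hft, hplast])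
  rw [← ENNReal.ofReal_sum_of_nonneg fun i _ => dist_nonneg]
  refine ENNReal.ofReal_le_ofReal ?_
  calc c * dist x y ≤ c * ∑ i : Fin n, dist (t i.castSucc) (t i.succ) := by
        rw [← ht0, ← htlast]
        exact mul_le_mul_of_nonneg_left (dist_zero_last_le_sum_dist n t) hc
    _ = ∑ i : Fin n, c * dist (t i.castSucc) (t i.succ) := Finset.mul_sum _ _ _
    _ ≤ ∑ i : Fin n, dist (p i.castSucc) (p i.succ) := by
        gcongr with i
        rw [← hft, ← hft]
        exact hf _ (hts _) _ (hts _) (by rw [hft, hft]; exact hlink i)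

theorem ofReal_dist_le_intrinsicDist {α : Type*} [MetricSpace α] {f : α → E} {s : Set α}
    (hf : ∀ c < 1, ∃ ε > 0, ∀ u ∈ s, ∀ v ∈ s,
      dist (f u) (f v) < ε → c * dist u v ≤ dist (f u) (f v))
    {x y : α} (hx : x ∈ s) (hy : y ∈ s) :
    ENNReal.ofReal (dist x y) ≤ intrinsicDist (f '' s) (f x) (f y) := by
  have hinj : InjOn f s := by
    obtain ⟨ε, hε, h⟩ := hf (1 / 2) (by norm_num)
    intro u hu v hv huv
    have := h u hu v hv (by rwa [huv, dist_self])
    rw [huv, dist_self] at this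
    exact dist_le_zero.1 (by linarith)
  refine ENNReal.le_of_forall_lt_one_mul_le fun a ha => ?_
  obtain ⟨ε, hε, h⟩ := hf a.toReal (ENNReal.toReal_lt_of_lt_ofReal (by simpa using ha))
  calc a * ENNReal.ofReal (dist x y) = ENNReal.ofReal (a.toReal * dist x y) := by
        rw [ENNReal.ofReal_mul ENNReal.toReal_nonneg, ENNReal.ofReal_toReal ha.ne_top]
    _ ≤ chainDist (f '' s) ε (f x) (f y) :=
        ofReal_mul_dist_le_chainDist ENNReal.toReal_nonneg hinj h hx hy
    _ ≤ intrinsicDist (f '' s) (f x) (f y) := le_iSup₂_of_le ε hε le_rfl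

end Chains

section Curves

variable {E : Type*} [NormedAddCommGroup E] [NormedSpace ℝ E]

theorem exists_pos_mul_dist_le_dist_of_dist_le {r : ℝ → E} (hr : ContDiff ℝ 1 r)
    (hunit : ∀ s, ‖deriv r s‖ = 1) (a b : ℝ) {c : ℝ} (hc : c < 1) :
    ∃ η > 0, ∀ u ∈ Icc a b, ∀ v ∈ Icc a b, dist u v ≤ η → c * dist u v ≤ dist (r u) (r v) := by
  obtain ⟨η, hη, hderiv⟩ := Metric.uniformContinuousOn_iff.1
    ((isCompact_Icc (a := a) (b := b)).uniformContinuousOn_of_continuous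
      (hr.continuous_deriv le_rfl).continuousOn) (1 - c) (by linarith)
  refine ⟨η / 2, half_pos hη, fun u hu v hv huv => ?_⟩
  have hconv : Convex ℝ (Icc a b ∩ Metric.closedBall u (η / 2)) :=
    (convex_Icc a b).inter (convex_closedBall u _)
  have hmv : ‖(r v - v • deriv r u) - (r u - u • deriv r u)‖ ≤ (1 - c) * ‖v - u‖ := by
    refine hconv.norm_image_sub_le_of_norm_hasDerivWithin_le
      (f := fun t => r t - t • deriv r u)
      (f' := fun t => deriv r t - deriv r u) (fun t _ => ?_) (fun t ht => ?_)
      ⟨hu, Metric.mem_closedBall_self (by linarith)⟩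
      ⟨hv, by rwa [Metric.mem_closedBall, dist_comm]⟩
    · have := (hr.differentiable one_ne_zero t).hasDerivAt.sub
        ((hasDerivAt_id t).smul_const (deriv r u))
      rw [one_smul] at this
      exact this.hasDerivWithinAt
    · rw [← dist_eq_norm]
      refine (hderiv t ht.1 u hu ?_).le
      have := Metric.mem_closedBall.1 ht.2
      linarith
  have hsmul : (r v - v • deriv r u) - (r u - u • deriv r u) =
      (r v - r u) - (v - u) • deriv r u := by
    module
  rw [hsmul] at hmv
  have := norm_sub_norm_le ((v - u) • deriv r u) (r v - r u)
  rw [norm_sub_rev ((v - u) • deriv r u), norm_smul, hunit, mul_one] at this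
  rw [dist_comm u, dist_comm (r u), dist_eq_norm, dist_eq_norm]
  linarith

theorem exists_pos_mul_dist_le_dist_of_dist_image_lt {r : ℝ → E} (hr : ContDiff ℝ 1 r)
    (hunit : ∀ s, ‖deriv r s‖ = 1) {a b : ℝ} (hinj : InjOn r (Icc a b)) {c : ℝ} (hc : c < 1) :
    ∃ ε > 0, ∀ u ∈ Icc a b, ∀ v ∈ Icc a b,
      dist (r u) (r v) < ε → c * dist u v ≤ dist (r u) (r v) := by
  obtain ⟨η, hη, hloc⟩ := exists_pos_mul_dist_le_dist_of_dist_le hr hunit a b hc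
  obtain ⟨ε, hε, hmod⟩ :=
    isCompact_Icc.exists_pos_forall_dist_lt_of_injOn hr.continuous.continuousOn hinj hη
  exact ⟨ε, hε, fun u hu v hv h => hloc u hu v hv (hmod u hu v hv h).le⟩

theorem eq_zero_of_hasDerivAt_smul_self {r : ℝ → E} (hr : ∀ u, ‖r u‖ = 1) {s c : ℝ}
    (hd : HasDerivAt r (c • r s) s) : c = 0 := by
  by_contra hc
  have hsmall := (hasDerivAt_iff_isLittleO_nhds_zero.1 hd).bound (half_pos (abs_pos.2 hc))
  have hto : Tendsto (fun t : ℝ => t * c) (𝓝[>] 0) (𝓝 0) := by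
    simpa using ((continuous_mul_const c).tendsto 0).mono_left nhdsWithin_le_nhds
  -- for small `t > 0`, `r (s + t c) ≈ (1 + t c²) • r s` would leave the unit sphere
  obtain ⟨t, ht, htpos⟩ := ((hto.eventually hsmall).and self_mem_nhdsWithin).exists
  have hrw : r (s + t * c) - r s - (t * c) • c • r s =
      r (s + t * c) - (1 + t * c ^ 2) • r s := by
    module
  rw [hrw] at ht
  have hlow := norm_sub_norm_le ((1 + t * c ^ 2) • r s) (r (s + t * c))
  rw [norm_sub_rev, norm_smul, hr, hr, mul_one, Real.norm_of_nonneg (by positivity)] at hlow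
  rw [norm_mul, Real.norm_of_nonneg htpos.le, Real.norm_eq_abs,
    show |c| / 2 * (t * |c|) = t * c ^ 2 / 2 by rw [← sq_abs]; ring] at ht
  have hpos : 0 < t * c ^ 2 := mul_pos htpos (by positivity)
  linarith

end Curves

theorem Complex.neg_inv_mul_mem_slitPlane {z w : ℂ} (hz : z ≠ 0)
    (hw : ∀ c : ℝ, 0 ≤ c → w ≠ c * z) : -z⁻¹ * w ∈ slitPlane := by
  rw [mem_slitPlane_iff_not_le_zero, nonpos_iff]
  rintro ⟨hre, him⟩
  refine hw (-(-z⁻¹ * w).re) (by linarith) ?_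
  have : -z⁻¹ * w = ((-z⁻¹ * w).re : ℂ) := ext (ofReal_re _).symm (by rw [ofReal_im, him])
  rw [ofReal_neg, ← this]
  field_simp

theorem Complex.injOn_of_im_deriv_div_ne_zero {f f' : ℝ → ℂ} {s : Set ℝ} (hs : Convex ℝ s)
    (hf : ∀ t ∈ s, HasDerivWithinAt f (f' t) s t) (hslit : ∀ t ∈ s, f t ∈ Complex.slitPlane)
    (him : ∀ t ∈ s, (f' t / f t).im ≠ 0) : InjOn f s := by
  set α : ℝ → ℝ := fun t => (Complex.log (f t)).im
  have hα : ∀ t ∈ s, HasDerivWithinAt α (f' t / f t).im s t := fun t ht =>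
    Complex.imCLM.hasFDerivAt.comp_hasDerivWithinAt t ((hf t ht).clog_real (hslit t ht))
  have hcont : ContinuousOn α s := fun t ht => (hα t ht).continuousWithinAt
  have hint : ∀ t ∈ interior s, HasDerivWithinAt α (f' t / f t).im (interior s) t :=
    fun t ht => (hα t (interior_subset ht)).mono interior_subset
  -- `α` is a branch of `arg ∘ f`, and by Darboux its derivative has constant sign on `s`
  refine InjOn.of_comp (g := fun z => (Complex.log z).im) ?_
  rcases hasDerivWithinAt_forall_lt_or_forall_gt_of_forall_ne hs hα him with hneg | hpos
  · exact (strictAntiOn_of_hasDerivWithinAt_neg hs hcont hint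
      fun t ht => hneg t (interior_subset ht)).injOn
  · exact (strictMonoOn_of_hasDerivWithinAt_pos hs hcont hint
      fun t ht => hpos t (interior_subset ht)).injOn

theorem injOn_of_norm_eq_one_of_notMem_image (hX : Module.finrank ℝ X = 2) {r : ℝ → X}
    {s : Set ℝ} (hs : Convex ℝ s) (hr : Differentiable ℝ r) (hsphere : ∀ u, ‖r u‖ = 1)
    (hderiv : ∀ u, deriv r u ≠ 0) {p : X} (hp : ‖p‖ = 1) (hps : p ∉ r '' s) : InjOn r s := by
  have : FiniteDimensional ℝ X := .of_finrank_eq_succ hX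
  let φ : X ≃L[ℝ] ℂ := (LinearEquiv.ofFinrankEq X ℂ
    (hX.trans Complex.finrank_real_complex.symm)).toContinuousLinearEquiv
  have hφ : ∀ (c : ℝ) (x : X), φ (c • x) = c * φ x := fun c x => by
    rw [map_smul, Complex.real_smul]
  have hφ0 : ∀ {x : X}, ‖x‖ = 1 → φ x ≠ 0 := fun hx h => by
    simp [φ.map_eq_zero_iff.1 h] at hx
  -- complex coordinates, rotated so that `p` lies on the negative real axis
  refine InjOn.of_comp (g := fun x => -(φ p)⁻¹ * φ x) (Complex.injOn_of_im_deriv_div_ne_zero hs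
    (f' := fun t => -(φ p)⁻¹ * φ (deriv r t)) (fun t _ => ?_) (fun t ht => ?_) (fun t _ => ?_))
  · exact ((φ.hasFDerivAt.comp_hasDerivAt t (hr t).hasDerivAt).const_mul _).hasDerivWithinAt
  · refine Complex.neg_inv_mul_mem_slitPlane (hφ0 hp) fun c hc hrc => hps ⟨t, ht, ?_⟩
    have hrt : r t = c • p := φ.injective (by rw [hrc, hφ])
    have hc1 : c = 1 := by simpa [hrt, norm_smul, hp, abs_of_nonneg hc] using hsphere t
    rw [hrt, hc1, one_smul]
  · rw [Function.comp_apply, mul_div_mul_left _ _ (neg_ne_zero.2 (inv_ne_zero (hφ0 hp)))]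
    intro him
    set c := (φ (deriv r t) / φ (r t)).re
    have hquot : φ (deriv r t) / φ (r t) = c :=
      Complex.ext (Complex.ofReal_re _).symm (by rw [Complex.ofReal_im, him])
    have hdr : deriv r t = c • r t :=
      φ.injective (by rw [hφ, ← hquot, div_mul_cancel₀ _ (hφ0 (hsphere t))])
    have hc : c = 0 := eq_zero_of_hasDerivAt_smul_self hsphere (hdr ▸ (hr t).hasDerivAt)
    exact hderiv t (by rw [hdr, hc, zero_smul])

theorem natParam_isometry_intrinsicDist_general {X : Type*}
    [NormedAddCommGroup X] [NormedSpace ℝ X]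
    (hX2 : Module.finrank ℝ X = 2)
    (r : ℝ → X) (hC1 : ContDiff ℝ 1 r)
    (hrange : Set.range r = {x : X | ‖x‖ = 1})
    (hunit : ∀ s : ℝ, ‖deriv r s‖ = 1)
    (a b : ℝ)
    (hne : r '' Set.Icc a b ≠ {x : X | ‖x‖ = 1}) :
    ∀ x ∈ Set.Icc a b, ∀ y ∈ Set.Icc a b,
      intrinsicDist (r '' Set.Icc a b) (r x) (r y) = ENNReal.ofReal |x - y| := by
  intro x hx y hy
  have hsphere : ∀ u, ‖r u‖ = 1 := fun u => hrange.subset (mem_range_self u)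
  obtain ⟨p, hp, hpr⟩ := exists_of_ssubset
    (((image_subset_range r _).trans hrange.subset).ssubset_of_ne hne)
  have hdiff := hC1.differentiable one_ne_zero
  have hinj : InjOn r (Icc a b) := injOn_of_norm_eq_one_of_notMem_image hX2 (convex_Icc a b)
    hdiff hsphere (fun u => norm_ne_zero_iff.1 (by rw [hunit]; exact one_ne_zero)) hp hpr
  have hlip : LipschitzWith 1 r := lipschitzWith_of_nnnorm_deriv_le hdiff fun u => by
    rw [← NNReal.coe_le_coe, coe_nnnorm, hunit, NNReal.coe_one]
  rw [← Real.dist_eq]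
  refine le_antisymm ?_ (ofReal_dist_le_intrinsicDist
    (fun c hc => exists_pos_mul_dist_le_dist_of_dist_image_lt hC1 hunit hinj hc) hx hy)
  simpa using
    intrinsicDist_image_le_of_lipschitzOnWith (convex_Icc a b) hlip.lipschitzOnWith hx hy

/-- The restriction of a `C¹` natural parameterization to a closed interval whose image is not
the whole sphere is an isometry onto the arc endowed with its intrinsic distance. -/
theorem natParam_isometry_intrinsicDist {X : Type*}
    [NormedAddCommGroup X] [NormedSpace ℝ X] [CompleteSpace X]
    (hX2 : Module.finrank ℝ X = 2)
    (r : ℝ → X) (hC1 : ContDiff ℝ 1 r)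
    (hrange : Set.range r = {x : X | ‖x‖ = 1})
    (hunit : ∀ s : ℝ, ‖deriv r s‖ = 1)
    (a b : ℝ) (hab : a ≤ b)
    (hne : r '' Set.Icc a b ≠ {x : X | ‖x‖ = 1}) :
    ∀ x ∈ Set.Icc a b, ∀ y ∈ Set.Icc a b,
      intrinsicDist (r '' Set.Icc a b) (r x) (r y) = ENNReal.ofReal |x - y| :=
  natParam_isometry_intrinsicDist_general hX2 r hC1 hrange hunit a b hne

end
end

section
/- Let X be a 2-dimensional real Banach space whose unit sphere admits a continuously differentiable natural parameterization. Then for any two natural parameterizations r₁, r₂ : ℝ → S_X there exists an isometry Φ : ℝ → ℝ of the real line (i.e. Φ(x) = ax + b for some a ∈ {−1, 1} and b ∈ ℝ) such that r₁ = r₂ ∘ Φ. -/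
noncomputable section
open MeasureTheory Set Filter
open scoped ENNReal Topology

variable {X : Type*} [NormedAddCommGroup X] [NormedSpace ℝ X]

/-! If `r` is a `C¹` unit-speed curve on the unit sphere of a plane, then `r'(t)` is never parallel
to `r(t)`: a norming functional at `r(t)` attains its maximum on the sphere there, so it kills
`r'(t)`. Hence `(t, λ) ↦ λ • r t` is a local diffeomorphism near `λ = 1`, and every differentiable
unit-speed curve `q` on the sphere lifts locally as `q = r ∘ ψ` with `|ψ'| = 1`; by Darboux's
theorem `ψ` is affine with slope `±1`. Since `r` is locally injective, such a local affine relation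
propagates along the connected line, so `q s = r (a * s + t₀)` on all of `ℝ` with `a = ±1`;
composing these relations for `r₁` and `r₂` gives the isometry. -/

open Metric Module

theorem HasDerivAt.apply_eq_zero_of_isLocalMax_norm {f : ℝ → X} {v : X} {t : ℝ}
    (hf : HasDerivAt f v t) (hmax : IsLocalMax (‖f ·‖) t) {φ : StrongDual ℝ X}
    (hφ : ‖φ‖ ≤ 1) (hφt : φ (f t) = ‖f t‖) : φ v = 0 := by
  have hφf : IsLocalMax (φ ∘ f) t := hmax.mono fun s hs => by
    calc φ (f s) ≤ ‖φ (f s)‖ := Real.le_norm_self _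
      _ ≤ ‖φ‖ * ‖f s‖ := φ.le_opNorm _
      _ ≤ 1 * ‖f t‖ := by gcongr
      _ = φ (f t) := by rw [one_mul, hφt]
  exact hφf.hasDerivAt_eq_zero (φ.hasFDerivAt.comp_hasDerivAt t hf)

theorem HasDerivAt.linearIndependent_of_norm_eq_one {f : ℝ → X} {v : X} {t : ℝ}
    (hf : HasDerivAt f v t) (hnorm : ∀ s, ‖f s‖ = 1) (hv : v ≠ 0) :
    LinearIndependent ℝ ![v, f t] := by
  obtain ⟨φ, hφ, hφt⟩ := exists_dual_vector'' ℝ (f t)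
  have hφv : φ v = 0 := hf.apply_eq_zero_of_isLocalMax_norm
    (Filter.Eventually.of_forall fun s => by simp [hnorm]) hφ hφt
  refine LinearIndependent.pair_iff.2 fun a b hab => ?_
  have hb : b = 0 := by simpa [hφv, hφt, hnorm] using congrArg φ hab
  subst hb
  exact ⟨(smul_eq_zero.1 (by simpa using hab)).resolve_right hv, rfl⟩

def coneMap (r : ℝ → X) (p : ℝ × ℝ) : X := p.2 • r p.1

theorem HasStrictDerivAt.hasStrictFDerivAt_coneMap {r : ℝ → X} {v : X} {t : ℝ}
    (hr : HasStrictDerivAt r v t) :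
    HasStrictFDerivAt (coneMap r)
      ((ContinuousLinearMap.fst ℝ ℝ ℝ).smulRight v +
        (ContinuousLinearMap.snd ℝ ℝ ℝ).smulRight (r t)) (t, 1) := by
  have hrc : HasStrictFDerivAt (fun p : ℝ × ℝ => r p.1)
      ((ContinuousLinearMap.smulRight (1 : ℝ →L[ℝ] ℝ) v).comp
        (ContinuousLinearMap.fst ℝ ℝ ℝ)) (t, 1) :=
    hr.hasStrictFDerivAt.comp ((t, 1) : ℝ × ℝ) hasStrictFDerivAt_fst
  exact (hasStrictFDerivAt_snd.smul hrc).congr_fderiv (by ext <;> simp)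

theorem HasStrictDerivAt.exists_equiv_hasStrictFDerivAt_coneMap (hX : finrank ℝ X = 2)
    {r : ℝ → X} {v : X} {t : ℝ} (hr : HasStrictDerivAt r v t) (hnorm : ∀ s, ‖r s‖ = 1)
    (hv : v ≠ 0) :
    ∃ e : (ℝ × ℝ) ≃L[ℝ] X, HasStrictFDerivAt (coneMap r) (e : (ℝ × ℝ) →L[ℝ] X) (t, 1) := by
  have : FiniteDimensional ℝ X := .of_finrank_pos (by omega)
  set N : (ℝ × ℝ) →L[ℝ] X := (ContinuousLinearMap.fst ℝ ℝ ℝ).smulRight v +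
    (ContinuousLinearMap.snd ℝ ℝ ℝ).smulRight (r t)
  have hinj : Function.Injective N := by
    refine (injective_iff_map_eq_zero N).2 fun ⟨a, b⟩ hab => ?_
    obtain ⟨rfl, rfl⟩ := LinearIndependent.pair_iff.1
      (hr.hasDerivAt.linearIndependent_of_norm_eq_one hnorm hv) a b hab
    rfl
  let e := (LinearMap.linearEquivOfInjective N.toLinearMap hinj (by simp [hX]))
  exact ⟨e.toContinuousLinearEquiv, hr.hasStrictFDerivAt_coneMap.congr_fderiv (by ext <;> rfl)⟩

theorem exists_eventually_eq_affine_of_hasDerivAt_abs_eq_one {ψ : ℝ → ℝ} {s₀ : ℝ}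
    (h : ∀ᶠ s in 𝓝 s₀, ∃ m, |m| = 1 ∧ HasDerivAt ψ m s) :
    ∃ a ∈ ({-1, 1} : Set ℝ), ∀ᶠ s in 𝓝 s₀, ψ s = a * (s - s₀) + ψ s₀ := by
  obtain ⟨δ, hδ, hball⟩ := eventually_nhds_iff_ball.1 h
  choose! ψ' hψ'_abs hψ' using hball
  have hs₀ : s₀ ∈ ball s₀ δ := mem_ball_self hδ
  -- Darboux: the derivative cannot jump between `-1` and `1` without taking the value `0`.
  have hord : (ψ' '' ball s₀ δ).OrdConnected :=
    (convex_ball s₀ δ).ordConnected.image_hasDerivWithinAt fun s hs => (hψ' s hs).hasDerivWithinAt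
  have hconst : ∀ s ∈ ball s₀ δ, ψ' s = ψ' s₀ := by
    intro s hs
    by_contra hne
    obtain ⟨u, hu, hu0⟩ := hord.uIcc_subset (mem_image_of_mem ψ' hs) (mem_image_of_mem ψ' hs₀)
      (show (0 : ℝ) ∈ uIcc (ψ' s) (ψ' s₀) by
        rcases (abs_eq zero_le_one).1 (hψ'_abs s hs) with h1 | h1 <;>
        rcases (abs_eq zero_le_one).1 (hψ'_abs s₀ hs₀) with h2 | h2 <;>
        simp_all)
    simpa [hu0] using hψ'_abs u hu
  refine ⟨ψ' s₀, by simpa [or_comm] using (abs_eq zero_le_one).1 (hψ'_abs s₀ hs₀),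
    eventually_nhds_iff_ball.2 ⟨δ, hδ, fun s hs => ?_⟩⟩
  refine isOpen_ball.eqOn_of_deriv_eq (g := fun u => ψ' s₀ * (u - s₀) + ψ s₀)
    (convex_ball s₀ δ).isPreconnected
    (fun u hu => (hψ' u hu).differentiableAt.differentiableWithinAt) (by fun_prop)
    (fun u hu => ?_) hs₀ (by simp) hs
  simp [(hψ' u hu).deriv, hconst u hu]

theorem exists_forall_eq_comp_affine_of_local {Y : Type*} [TopologicalSpace Y] [T2Space Y]
    {q r : ℝ → Y} (hq : Continuous q) (hr : Continuous r) (hinj : ∀ t, ∃ U ∈ 𝓝 t, InjOn r U)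
    (hloc : ∀ s t, q s = r t →
      ∃ a ∈ ({-1, 1} : Set ℝ), ∀ᶠ u in 𝓝 s, q u = r (a * (u - s) + t))
    {t₀ : ℝ} (h0 : q 0 = r t₀) :
    ∃ a ∈ ({-1, 1} : Set ℝ), ∀ s, q s = r (a * s + t₀) := by
  obtain ⟨a, ha, h0a⟩ := hloc 0 t₀ h0
  refine ⟨a, ha, fun s => ?_⟩
  set S := {s | ∀ᶠ u in 𝓝 s, q u = r (a * u + t₀)}
  have hS_closed : IsClosed S := by
    refine isClosed_of_closure_subset fun s hs => ?_
    by_cases hsS : s ∈ S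
    · exact hsS
    have hqs : q s = r (a * s + t₀) :=
      closure_minimal (fun u (hu : u ∈ S) => hu.self_of_nhds)
        (isClosed_eq hq (by fun_prop : Continuous fun u => r (a * u + t₀))) hs
    obtain ⟨ε, -, hε⟩ := hloc s _ hqs
    obtain ⟨U, hU, hinjU⟩ := hinj (a * s + t₀)
    have hV : ∀ᶠ u in 𝓝 s, q u = r (ε * (u - s) + (a * s + t₀)) ∧
        a * u + t₀ ∈ U ∧ ε * (u - s) + (a * s + t₀) ∈ U :=
      hε.and (((by fun_prop : Continuous fun u => a * u + t₀).tendsto s).eventually_mem hU |>.and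
        (((by fun_prop : Continuous fun u => ε * (u - s) + (a * s + t₀)).tendsto' s _
          (by ring)).eventually_mem hU))
    obtain ⟨s', hs'V, hs'S⟩ := mem_closure_iff_nhds.1 hs _ hV
    have hs's : s' - s ≠ 0 := sub_ne_zero.2 fun h => hsS (h ▸ hs'S)
    -- The two affine maps agree at `s` and, by injectivity of `r` on `U`, at `s' ≠ s`.
    have haε : a = ε := by
      have := hinjU hs'V.2.1 hs'V.2.2 (hs'S.self_of_nhds.symm.trans hs'V.1)
      exact mul_right_cancel₀ hs's (by linarith)
    filter_upwards [hV] with u hu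
    rw [hu.1, haε]
    ring_nf
  have hS : S = univ := IsClopen.eq_univ ⟨hS_closed, isOpen_setOfPred_eventually_nhds⟩
    ⟨0, by simpa [S] using h0a⟩
  exact (hS ▸ mem_univ s : s ∈ S).self_of_nhds

structure IsUnitSpeedSphereCurve (q q' : ℝ → X) : Prop where
  hasDerivAt : ∀ s, HasDerivAt q (q' s) s
  norm_deriv : ∀ s, ‖q' s‖ = 1
  norm_eq_one : ∀ s, ‖q s‖ = 1

namespace IsUnitSpeedSphereCurve

variable {r r' q q' : ℝ → X}

theorem of_range (hrange : range q = {x : X | ‖x‖ = 1})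
    (hq : ∀ s, HasDerivAt q (q' s) s ∧ ‖q' s‖ = 1) : IsUnitSpeedSphereCurve q q' :=
  ⟨fun s => (hq s).1, fun s => (hq s).2, fun s => (hrange ▸ mem_range_self s : q s ∈ _)⟩

theorem continuous (hq : IsUnitSpeedSphereCurve q q') : Continuous q :=
  continuous_iff_continuousAt.2 fun s => (hq.hasDerivAt s).continuousAt

theorem exists_equiv_hasStrictFDerivAt_coneMap (hX : finrank ℝ X = 2)
    (hr : ∀ t, HasStrictDerivAt r (r' t) t) (hrc : IsUnitSpeedSphereCurve r r') (t : ℝ) :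
    ∃ e : (ℝ × ℝ) ≃L[ℝ] X, HasStrictFDerivAt (coneMap r) (e : (ℝ × ℝ) →L[ℝ] X) (t, 1) :=
  (hr t).exists_equiv_hasStrictFDerivAt_coneMap hX hrc.norm_eq_one
    (norm_ne_zero_iff.1 (by simp [hrc.norm_deriv t]))

theorem exists_mem_nhds_injOn (hX : finrank ℝ X = 2)
    (hr : ∀ t, HasStrictDerivAt r (r' t) t) (hrc : IsUnitSpeedSphereCurve r r') (t₀ : ℝ) :
    ∃ U ∈ 𝓝 t₀, InjOn r U := by
  obtain ⟨e, he⟩ := hrc.exists_equiv_hasStrictFDerivAt_coneMap hX hr t₀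
  set Φ := he.toOpenPartialHomeomorph (coneMap r)
  refine ⟨(fun t => (t, 1)) ⁻¹' Φ.source, (by fun_prop : Continuous fun t : ℝ => (t, (1 : ℝ)))
    |>.continuousAt.preimage_mem_nhds
      (Φ.open_source.mem_nhds he.mem_toOpenPartialHomeomorph_source), fun t ht t' ht' h => ?_⟩
  exact congrArg Prod.fst (Φ.injOn ht ht' (by simpa [Φ, coneMap] using h))

theorem exists_eventually_eq_comp (hX : finrank ℝ X = 2)
    (hr : ∀ t, HasStrictDerivAt r (r' t) t) (hrc : IsUnitSpeedSphereCurve r r')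
    (hq : IsUnitSpeedSphereCurve q q') {s₀ t₀ : ℝ} (h0 : q s₀ = r t₀) :
    ∃ ψ : ℝ → ℝ, ψ s₀ = t₀ ∧ ∀ᶠ s in 𝓝 s₀, q s = r (ψ s) ∧ ∃ m, |m| = 1 ∧ HasDerivAt ψ m s := by
  obtain ⟨e, he⟩ := hrc.exists_equiv_hasStrictFDerivAt_coneMap hX hr t₀
  set Φ := he.toOpenPartialHomeomorph (coneMap r)
  have hΦ : ∀ p, Φ p = p.2 • r p.1 := fun p => rfl
  have hsrc : (t₀, (1 : ℝ)) ∈ Φ.source := he.mem_toOpenPartialHomeomorph_source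
  have hq₀ : q s₀ = Φ (t₀, 1) := by rw [hΦ, one_smul, h0]
  have htgt₀ : q s₀ ∈ Φ.target := hq₀ ▸ Φ.map_source hsrc
  have hsymm₀ : Φ.symm (q s₀) = (t₀, 1) := by rw [hq₀, Φ.left_inv hsrc]
  have htgt : ∀ᶠ s in 𝓝 s₀, q s ∈ Φ.target :=
    hq.continuous.continuousAt.preimage_mem_nhds (Φ.open_target.mem_nhds htgt₀)
  have hpos : ∀ᶠ s in 𝓝 s₀, 0 < (Φ.symm (q s)).2 := by
    have hc : ContinuousAt (fun s => (Φ.symm (q s)).2) s₀ := continuous_snd.continuousAt.comp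
      ((Φ.continuousAt_symm htgt₀).comp hq.continuous.continuousAt)
    exact hc.eventually (lt_mem_nhds (by simp [hsymm₀]))
  -- On the unit sphere the coordinate `λ` of `q s = λ • r t` is `±1`, hence `1` near `s₀`.
  have hlift : ∀ᶠ s in 𝓝 s₀, q s ∈ Φ.target ∧ Φ.symm (q s) = ((Φ.symm (q s)).1, 1) := by
    filter_upwards [htgt, hpos] with s hs hs_pos
    refine ⟨hs, Prod.ext rfl ?_⟩
    simpa [hΦ, norm_smul, hrc.norm_eq_one, hq.norm_eq_one, abs_of_pos hs_pos]
      using congrArg norm (Φ.right_inv hs)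
  set ψ : ℝ → ℝ := fun s => (Φ.symm (q s)).1
  refine ⟨ψ, by simp [ψ, hsymm₀], ?_⟩
  filter_upwards [hlift.eventually_nhds] with s hs
  have hqψ : ∀ᶠ u in 𝓝 s, q u = r (ψ u) := hs.mono fun u hu => by
    calc q u = Φ (Φ.symm (q u)) := (Φ.right_inv hu.1).symm
      _ = r (ψ u) := by rw [hu.2, hΦ, one_smul]
  obtain ⟨e₂, he₂⟩ := hrc.exists_equiv_hasStrictFDerivAt_coneMap hX hr (ψ s)
  have hΦ' : HasFDerivAt Φ (e₂ : (ℝ × ℝ) →L[ℝ] X) (Φ.symm (q s)) := by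
    rw [hs.self_of_nhds.2]
    exact he₂.hasFDerivAt
  have hψ : HasDerivAt ψ (e₂.symm (q' s)).1 s :=
    (ContinuousLinearMap.fst ℝ ℝ ℝ).hasFDerivAt.comp_hasDerivAt s
      ((Φ.hasFDerivAt_symm hs.self_of_nhds.1 hΦ').comp_hasDerivAt s (hq.hasDerivAt s))
  have hq' : q' s = (e₂.symm (q' s)).1 • r' (ψ s) :=
    (hq.hasDerivAt s).unique (((hr (ψ s)).hasDerivAt.scomp s hψ).congr_of_eventuallyEq hqψ)
  refine ⟨hqψ.self_of_nhds, _, ?_, hψ⟩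
  simpa [hq.norm_deriv, hrc.norm_deriv, norm_smul] using (congrArg norm hq').symm

theorem exists_eventually_eq_comp_affine (hX : finrank ℝ X = 2)
    (hr : ∀ t, HasStrictDerivAt r (r' t) t) (hrc : IsUnitSpeedSphereCurve r r')
    (hq : IsUnitSpeedSphereCurve q q') {s₀ t₀ : ℝ} (h0 : q s₀ = r t₀) :
    ∃ a ∈ ({-1, 1} : Set ℝ), ∀ᶠ s in 𝓝 s₀, q s = r (a * (s - s₀) + t₀) := by
  obtain ⟨ψ, hψ₀, hψ⟩ := hrc.exists_eventually_eq_comp hX hr hq h0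
  obtain ⟨a, ha, hψ_aff⟩ :=
    exists_eventually_eq_affine_of_hasDerivAt_abs_eq_one (hψ.mono fun _ hs => hs.2)
  refine ⟨a, ha, ?_⟩
  filter_upwards [hψ, hψ_aff] with s hs hs_aff
  rw [hs.1, hs_aff, hψ₀]

theorem exists_forall_eq_comp_affine (hX : finrank ℝ X = 2)
    (hr : ∀ t, HasStrictDerivAt r (r' t) t) (hrc : IsUnitSpeedSphereCurve r r')
    (hq : IsUnitSpeedSphereCurve q q') {t₀ : ℝ} (h0 : q 0 = r t₀) :
    ∃ a ∈ ({-1, 1} : Set ℝ), ∀ s, q s = r (a * s + t₀) :=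
  exists_forall_eq_comp_affine_of_local hq.continuous hrc.continuous
    (hrc.exists_mem_nhds_injOn hX hr)
    (fun _ _ h => hrc.exists_eventually_eq_comp_affine hX hr hq h) h0

end IsUnitSpeedSphereCurve

theorem natParam_unique_up_to_isometry_general {X : Type*}
    [NormedAddCommGroup X] [NormedSpace ℝ X]
    (hX2 : Module.finrank ℝ X = 2)
    (hsm : ∃ r : ℝ → X, ContDiff ℝ 1 r ∧ Set.range r = {x : X | ‖x‖ = 1} ∧
      ∀ s : ℝ, ‖deriv r s‖ = 1)
    (r₁ r₂ r₁' r₂' : ℝ → X)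
    (h₁ : Set.range r₁ = {x : X | ‖x‖ = 1})
    (h₁' : ∀ s : ℝ, HasDerivAt r₁ (r₁' s) s ∧ ‖r₁' s‖ = 1)
    (h₂ : Set.range r₂ = {x : X | ‖x‖ = 1})
    (h₂' : ∀ s : ℝ, HasDerivAt r₂ (r₂' s) s ∧ ‖r₂' s‖ = 1) :
    ∃ a ∈ ({-1, 1} : Set ℝ), ∃ c : ℝ, ∀ x : ℝ, r₁ x = r₂ (a * x + c) := by
  obtain ⟨r, hr_C1, hr_range, hr_speed⟩ := hsm
  have hr : ∀ t, HasStrictDerivAt r (deriv r t) t :=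
    fun t => hr_C1.contDiffAt.hasStrictDerivAt one_ne_zero
  have hrc : IsUnitSpeedSphereCurve r (deriv r) :=
    .of_range hr_range fun t => ⟨(hr t).hasDerivAt, hr_speed t⟩
  have hq₁ := IsUnitSpeedSphereCurve.of_range h₁ h₁'
  have hq₂ := IsUnitSpeedSphereCurve.of_range h₂ h₂'
  obtain ⟨t₁, ht₁⟩ : r₁ 0 ∈ range r := hr_range ▸ hq₁.norm_eq_one 0
  obtain ⟨t₂, ht₂⟩ : r₂ 0 ∈ range r := hr_range ▸ hq₂.norm_eq_one 0
  obtain ⟨a₁, ha₁, hl₁⟩ := hrc.exists_forall_eq_comp_affine hX2 hr hq₁ ht₁.symm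
  obtain ⟨a₂, ha₂, hl₂⟩ := hrc.exists_forall_eq_comp_affine hX2 hr hq₂ ht₂.symm
  have ha₂_sq : a₂ * a₂ = 1 := by rcases ha₂ with rfl | rfl <;> norm_num
  refine ⟨a₂ * a₁, by rcases ha₁ with rfl | rfl <;> rcases ha₂ with rfl | rfl <;> norm_num,
    a₂ * (t₁ - t₂), fun x => ?_⟩
  rw [hl₁, hl₂]
  congr 1
  linear_combination (t₂ - t₁ - a₁ * x) * ha₂_sq

/-- Any two natural parameterizations of the unit sphere of a 2-dimensional Banach space
admitting a `C¹` natural parameterization differ by an isometry `x ↦ a·x + c` of the line. -/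
theorem natParam_unique_up_to_isometry {X : Type*}
    [NormedAddCommGroup X] [NormedSpace ℝ X] [CompleteSpace X]
    (hX2 : Module.finrank ℝ X = 2)
    (hsm : ∃ r : ℝ → X, ContDiff ℝ 1 r ∧ Set.range r = {x : X | ‖x‖ = 1} ∧
      ∀ s : ℝ, ‖deriv r s‖ = 1)
    (r₁ r₂ r₁' r₂' : ℝ → X)
    (h₁ : Set.range r₁ = {x : X | ‖x‖ = 1})
    (h₁' : ∀ s : ℝ, HasDerivAt r₁ (r₁' s) s ∧ ‖r₁' s‖ = 1)
    (h₂ : Set.range r₂ = {x : X | ‖x‖ = 1})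
    (h₂' : ∀ s : ℝ, HasDerivAt r₂ (r₂' s) s ∧ ‖r₂' s‖ = 1) :
    ∃ a ∈ ({-1, 1} : Set ℝ), ∃ c : ℝ, ∀ x : ℝ, r₁ x = r₂ (a * x + c) :=
  natParam_unique_up_to_isometry_general hX2 hsm r₁ r₂ r₁' r₂' h₁ h₁' h₂ h₂'

end
end

section
/- Let X be a 2-based Banach space with polar parameterization p and constants c, C. Then for every t, ε ∈ ℝ: (c/C)·|sin ε| ≤ ‖p(t+ε) − p(t)‖ ≤ (4C²/c²)·|sin(ε/2)| ≤ (2C²/c²)·|ε|. -/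
noncomputable section
open MeasureTheory Set Filter
open scoped ENNReal Topology

variable {X : Type*} [NormedAddCommGroup X] [NormedSpace ℝ X]

/-!
Through the basis, `X` is identified with `ℂ`: `|·|` becomes the modulus and `e^{it}` the complex
exponential, and `c |x| ≤ ‖x‖ ≤ C |x|` by homogeneity, with `c > 0` by compactness of the
Euclidean unit circle. For the lower bound, rotating
`p(t + ε) - p(t)` by `e^{-it}` leaves its modulus unchanged and gives imaginary part
`sin ε / ‖e^{i(t+ε)}‖`. For the upper bound, `‖x/‖x‖ - y/‖y‖‖ ≤ 2‖x - y‖/‖x‖` in any normed space,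
and `|e^{i(t+ε)} - e^{it}| = 2 |sin (ε/2)|`.
-/

namespace NormedSpace

variable {V : Type*} [NormedAddCommGroup V] [NormedSpace ℝ V]

theorem norm_normalize_le (x : V) : ‖normalize x‖ ≤ 1 := by
  by_cases hx : x = 0
  · simp [hx]
  · rw [norm_normalize hx]

theorem norm_normalize_sub_normalize_le {x : V} (hx : x ≠ 0) (y : V) :
    ‖normalize x - normalize y‖ ≤ 2 * ‖x - y‖ / ‖x‖ := by
  have hx' : 0 < ‖x‖ := norm_pos_iff.mpr hx
  have hsplit : normalize x - normalize y =
      ‖x‖⁻¹ • ((x - y) + (‖y‖ - ‖x‖) • normalize y) := by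
    rw [sub_smul, norm_smul_normalize, sub_add_sub_cancel, smul_sub, smul_smul,
      inv_mul_cancel₀ hx'.ne', one_smul, normalize]
  rw [hsplit, norm_smul, norm_inv, norm_norm, inv_mul_le_iff₀ hx', mul_div_cancel₀ _ hx'.ne']
  calc ‖(x - y) + (‖y‖ - ‖x‖) • normalize y‖
      ≤ ‖x - y‖ + |‖y‖ - ‖x‖| * ‖normalize y‖ := by
        grw [norm_add_le, norm_smul, Real.norm_eq_abs]
    _ ≤ ‖x - y‖ + ‖x - y‖ * 1 := by
        gcongr
        · rw [abs_sub_comm]; exact abs_norm_sub_norm_le x y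
        · exact norm_normalize_le y
    _ = 2 * ‖x - y‖ := by ring

end NormedSpace

namespace Complex

theorem exp_ofReal_add_mul_I (t ε : ℝ) : exp (↑(t + ε) * I) = exp (↑t * I) * exp (↑ε * I) := by
  rw [← exp_add]; push_cast; ring_nf

theorem norm_exp_ofReal_add_mul_I_sub_exp_mul_I (t ε : ℝ) :
    ‖exp (↑(t + ε) * I) - exp (↑t * I)‖ = 2 * |Real.sin (ε / 2)| := by
  rw [exp_ofReal_add_mul_I, ← mul_sub_one, norm_mul, norm_exp_ofReal_mul_I, one_mul, mul_comm _ I,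
    norm_exp_I_mul_ofReal_sub_one, norm_mul, Real.norm_eq_abs, Real.norm_eq_abs, abs_two]

theorem abs_mul_sin_le_norm_sub (r s t ε : ℝ) :
    |r * Real.sin ε| ≤ ‖(r : ℂ) * exp (↑(t + ε) * I) - (s : ℂ) * exp (↑t * I)‖ := by
  have : (r : ℂ) * exp (↑(t + ε) * I) - (s : ℂ) * exp (↑t * I)
      = exp (↑t * I) * (r * exp (ε * I) - s) := by
    rw [exp_ofReal_add_mul_I]; ring
  rw [this, norm_mul, norm_exp_ofReal_mul_I, one_mul]
  refine le_of_eq_of_le ?_ (abs_im_le_norm _)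
  rw [sub_im, ofReal_im, sub_zero, im_ofReal_mul, exp_ofReal_mul_I_im]

end Complex

section basis

variable (b : Module.Basis (Fin 2) ℝ X)

def Module.Basis.toComplex : X ≃ₗ[ℝ] ℂ := b.equiv Complex.basisOneI (Equiv.refl _)

theorem Module.Basis.toComplex_apply (x : X) :
    b.toComplex x = b.coord 0 x + b.coord 1 x * Complex.I := by
  nth_rw 1 [← b.sum_repr x]
  rw [Fin.sum_univ_two, map_add, map_smul, map_smul, Module.Basis.toComplex,
    Module.Basis.equiv_apply, Module.Basis.equiv_apply]
  simp [Complex.real_smul]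

theorem euclNorm_eq_norm_toComplex (x : X) : euclNorm b x = ‖b.toComplex x‖ := by
  rw [euclNorm, Complex.norm_def, Complex.normSq_apply, b.toComplex_apply]
  simp [sq]

theorem toComplex_expV (t : ℝ) : b.toComplex (expV b t) = Complex.exp (t * Complex.I) := by
  rw [Complex.exp_mul_I, expV]
  simp [Module.Basis.toComplex, Module.Basis.equiv_apply, ← Complex.ofReal_cos, ← Complex.ofReal_sin]

theorem euclNorm_nonneg (x : X) : 0 ≤ euclNorm b x := Real.sqrt_nonneg _

theorem euclNorm_smul (r : ℝ) (x : X) : euclNorm b (r • x) = |r| * euclNorm b x := by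
  rw [euclNorm_eq_norm_toComplex, euclNorm_eq_norm_toComplex, map_smul, norm_smul,
    Real.norm_eq_abs]

theorem euclNorm_eq_one_eq_image_sphere :
    {x : X | euclNorm b x = 1} = b.toComplex.symm '' Metric.sphere 0 1 := by
  rw [LinearEquiv.image_symm_eq_preimage]
  ext x
  simp [euclNorm_eq_norm_toComplex]

theorem isCompact_euclNorm_eq_one : IsCompact {x : X | euclNorm b x = 1} := by
  rw [euclNorm_eq_one_eq_image_sphere]
  exact (isCompact_sphere 0 1).image b.toComplex.symm.toLinearMap.continuous_of_finiteDimensional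

theorem euclNorm_basis_zero : euclNorm b (b 0) = 1 := by
  simp [euclNorm_eq_norm_toComplex, Module.Basis.toComplex, Module.Basis.equiv_apply]

theorem exists_euclNorm_eq_one_and_eq_smul (x : X) :
    ∃ y, euclNorm b y = 1 ∧ x = euclNorm b x • y := by
  by_cases hx : x = 0
  · exact ⟨b 0, euclNorm_basis_zero b, by simp [hx, euclNorm_eq_norm_toComplex]⟩
  have hr : euclNorm b x ≠ 0 := by simpa [euclNorm_eq_norm_toComplex] using hx
  refine ⟨(euclNorm b x)⁻¹ • x, ?_, ?_⟩
  · rw [euclNorm_smul, abs_inv, abs_of_nonneg (euclNorm_nonneg b x), inv_mul_cancel₀ hr]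
  · rw [smul_smul, mul_inv_cancel₀ hr, one_smul]

theorem cConst_le_norm {x : X} (hx : euclNorm b x = 1) : cConst b ≤ ‖x‖ :=
  csInf_le ⟨0, by rintro _ ⟨y, -, rfl⟩; exact norm_nonneg y⟩ ⟨x, hx, rfl⟩

theorem norm_le_CConst {x : X} (hx : euclNorm b x = 1) : ‖x‖ ≤ CConst b :=
  le_csSup ((isCompact_euclNorm_eq_one b).image continuous_norm).bddAbove ⟨x, hx, rfl⟩

theorem cConst_pos : 0 < cConst b := by
  obtain ⟨x, hx, hcx⟩ := ((isCompact_euclNorm_eq_one b).image continuous_norm).sInf_mem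
    ⟨_, _, euclNorm_basis_zero b, rfl⟩
  rw [cConst, ← hcx, norm_pos_iff]
  rintro rfl
  simp [euclNorm_eq_norm_toComplex] at hx

theorem cConst_le_CConst : cConst b ≤ CConst b :=
  (cConst_le_norm b (euclNorm_basis_zero b)).trans (norm_le_CConst b (euclNorm_basis_zero b))

theorem cConst_mul_euclNorm_le_norm (x : X) : cConst b * euclNorm b x ≤ ‖x‖ := by
  obtain ⟨y, hy, hxy⟩ := exists_euclNorm_eq_one_and_eq_smul b x
  conv_rhs => rw [hxy, norm_smul, Real.norm_of_nonneg (euclNorm_nonneg b x)]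
  rw [mul_comm]
  exact mul_le_mul_of_nonneg_left (cConst_le_norm b hy) (euclNorm_nonneg b x)

theorem norm_le_CConst_mul_euclNorm (x : X) : ‖x‖ ≤ CConst b * euclNorm b x := by
  obtain ⟨y, hy, hxy⟩ := exists_euclNorm_eq_one_and_eq_smul b x
  conv_lhs => rw [hxy, norm_smul, Real.norm_of_nonneg (euclNorm_nonneg b x)]
  rw [mul_comm]
  exact mul_le_mul_of_nonneg_right (norm_le_CConst b hy) (euclNorm_nonneg b x)

theorem euclNorm_expV (t : ℝ) : euclNorm b (expV b t) = 1 := by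
  rw [euclNorm_eq_norm_toComplex, toComplex_expV, Complex.norm_exp_ofReal_mul_I]

theorem polarParam_eq_normalize (t : ℝ) : polarParam b t = NormedSpace.normalize (expV b t) :=
  rfl

theorem expV_ne_zero (t : ℝ) : expV b t ≠ 0 := by
  intro h
  simpa [h, euclNorm_eq_norm_toComplex] using euclNorm_expV b t

theorem euclNorm_expV_add_sub_expV (t ε : ℝ) :
    euclNorm b (expV b (t + ε) - expV b t) = 2 * |Real.sin (ε / 2)| := by
  rw [euclNorm_eq_norm_toComplex, map_sub, toComplex_expV, toComplex_expV,
    Complex.norm_exp_ofReal_add_mul_I_sub_exp_mul_I]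

theorem abs_sin_le_norm_expV_mul_euclNorm_polarParam_sub (t ε : ℝ) :
    |Real.sin ε| ≤ ‖expV b (t + ε)‖ * euclNorm b (polarParam b (t + ε) - polarParam b t) := by
  have hpos : 0 < ‖expV b (t + ε)‖ := norm_pos_iff.mpr (expV_ne_zero b _)
  have key := Complex.abs_mul_sin_le_norm_sub ‖expV b (t + ε)‖⁻¹ ‖expV b t‖⁻¹ t ε
  rw [abs_mul, abs_inv, abs_norm, inv_mul_le_iff₀ hpos] at key
  simpa [euclNorm_eq_norm_toComplex, polarParam, toComplex_expV, Complex.real_smul] using key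

theorem cConst_div_CConst_mul_abs_sin_le (t ε : ℝ) :
    cConst b / CConst b * |Real.sin ε| ≤ ‖polarParam b (t + ε) - polarParam b t‖ := by
  set u := polarParam b (t + ε) - polarParam b t
  have hc := cConst_pos b
  have hC : 0 < CConst b := hc.trans_le (cConst_le_CConst b)
  have hu₀ : 0 ≤ cConst b * euclNorm b u := mul_nonneg hc.le (euclNorm_nonneg b u)
  have ha : ‖expV b (t + ε)‖ ≤ CConst b := norm_le_CConst b (euclNorm_expV b _)
  have hu : cConst b * euclNorm b u ≤ ‖u‖ := cConst_mul_euclNorm_le_norm b u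
  rw [div_mul_eq_mul_div, div_le_iff₀ hC]
  calc cConst b * |Real.sin ε| ≤ cConst b * (‖expV b (t + ε)‖ * euclNorm b u) :=
        mul_le_mul_of_nonneg_left (abs_sin_le_norm_expV_mul_euclNorm_polarParam_sub b t ε) hc.le
    _ = ‖expV b (t + ε)‖ * (cConst b * euclNorm b u) := by ring
    _ ≤ CConst b * ‖u‖ := by gcongr
    _ = ‖u‖ * CConst b := mul_comm _ _

theorem norm_polarParam_sub_le (t ε : ℝ) :
    ‖polarParam b (t + ε) - polarParam b t‖ ≤
      4 * CConst b ^ 2 / cConst b ^ 2 * |Real.sin (ε / 2)| := by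
  have hc := cConst_pos b
  have hcC := cConst_le_CConst b
  have hC : 0 < CConst b := hc.trans_le hcC
  have ha : cConst b ≤ ‖expV b (t + ε)‖ := cConst_le_norm b (euclNorm_expV b _)
  have hdiff : ‖expV b (t + ε) - expV b t‖ ≤ CConst b * (2 * |Real.sin (ε / 2)|) := by
    rw [← euclNorm_expV_add_sub_expV b t ε]
    exact norm_le_CConst_mul_euclNorm b _
  have hCc : 1 ≤ CConst b / cConst b := (one_le_div₀ hc).mpr hcC
  rw [polarParam_eq_normalize, polarParam_eq_normalize]
  calc ‖NormedSpace.normalize (expV b (t + ε)) - NormedSpace.normalize (expV b t)‖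
      ≤ 2 * ‖expV b (t + ε) - expV b t‖ / ‖expV b (t + ε)‖ :=
        NormedSpace.norm_normalize_sub_normalize_le (expV_ne_zero b _) _
    _ ≤ 2 * (CConst b * (2 * |Real.sin (ε / 2)|)) / cConst b := by gcongr
    _ = 4 * CConst b / cConst b * |Real.sin (ε / 2)| * 1 := by ring
    _ ≤ 4 * CConst b / cConst b * |Real.sin (ε / 2)| * (CConst b / cConst b) := by gcongr
    _ = 4 * CConst b ^ 2 / cConst b ^ 2 * |Real.sin (ε / 2)| := by ring

end basis

theorem polarParam_bounds_general (b : Module.Basis (Fin 2) ℝ X) (t ε : ℝ) :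
    (cConst b / CConst b) * |Real.sin ε| ≤ ‖polarParam b (t + ε) - polarParam b t‖ ∧
    ‖polarParam b (t + ε) - polarParam b t‖ ≤
      (4 * (CConst b)^2 / (cConst b)^2) * |Real.sin (ε / 2)| ∧
    (4 * (CConst b)^2 / (cConst b)^2) * |Real.sin (ε / 2)| ≤
      (2 * (CConst b)^2 / (cConst b)^2) * |ε| := by
  refine ⟨cConst_div_CConst_mul_abs_sin_le b t ε, norm_polarParam_sub_le b t ε, ?_⟩
  have hsin : |Real.sin (ε / 2)| ≤ |ε| / 2 := by
    simpa [abs_div] using Real.abs_sin_le_abs (x := ε / 2)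
  calc 4 * CConst b ^ 2 / cConst b ^ 2 * |Real.sin (ε / 2)|
      ≤ 4 * CConst b ^ 2 / cConst b ^ 2 * (|ε| / 2) := by gcongr
    _ = 2 * CConst b ^ 2 / cConst b ^ 2 * |ε| := by ring

/-- Lipschitz-type lower and upper bounds for the polar parameterization. -/
theorem polarParam_bounds [CompleteSpace X] (b : Module.Basis (Fin 2) ℝ X) (t ε : ℝ) :
    (cConst b / CConst b) * |Real.sin ε| ≤ ‖polarParam b (t + ε) - polarParam b t‖ ∧
    ‖polarParam b (t + ε) - polarParam b t‖ ≤
      (4 * (CConst b)^2 / (cConst b)^2) * |Real.sin (ε / 2)| ∧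
    (4 * (CConst b)^2 / (cConst b)^2) * |Real.sin (ε / 2)| ≤
      (2 * (CConst b)^2 / (cConst b)^2) * |ε| :=
  polarParam_bounds_general b t ε

end
end

section
/- Let X be a 2-based Banach space with polar parameterization p and constants c, C. Let t, u, α, β ∈ ℝ be such that p is differentiable at t and at u, p'(t) = λ·p(u) for some real λ > 0, and p'(u)/|p'(u)| = α·p(u)/|p(u)| + β·p(t)/|p(t)| (where |·| is the associated Euclidean norm). Then |α| ≤ ((C + c)/c)·|β|. -/
noncomputable section
open MeasureTheory Set Filter
open scoped ENNReal Topology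

variable {X : Type*} [NormedAddCommGroup X] [NormedSpace ℝ X]

/-! Since `‖p‖ ≡ 1`, the point `p(u)` is Birkhoff orthogonal to `p'(u)`, i.e.
`‖p(u) + r • p'(u)‖ ≥ 1` for all `r`: by convexity of the norm, `‖p(u) + r • p'(u)‖ - 1` dominates,
up to `o(1)`, the difference quotients of `τ ↦ ‖p(u + τ r)‖ - 1 ≥ 0`. Writing a multiple of `p'(u)`
as `a • p(u) + w`, this forces `|a| ≤ ‖w‖`, which for the given decomposition reads
`|α| / |p(u)| ≤ |β| / |p(t)|`. Finally `1 / |p(u)| ≥ c` and `1 / |p(t)| ≤ C` because `‖p‖ = 1`. -/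

section BirkhoffOrthogonal

variable {E : Type*} [NormedAddCommGroup E] [NormedSpace ℝ E]

def BirkhoffOrthogonal (x y : E) : Prop :=
  ∀ r : ℝ, ‖x‖ ≤ ‖x + r • y‖

-- `k = 0` is allowed: it covers `p'(u) = 0`, where the junk value `|p'(u)|⁻¹ = 0` enters.
theorem BirkhoffOrthogonal.abs_mul_norm_le {x y w : E} {k a : ℝ} (h : BirkhoffOrthogonal x y)
    (hy : k • y = a • x + w) : |a| * ‖x‖ ≤ ‖w‖ := by
  rcases eq_or_ne a 0 with rfl | ha
  · simp
  have hxy : x + (-(a⁻¹ * k)) • y = (-a⁻¹) • w := by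
    rw [neg_smul, mul_smul, hy, smul_add, smul_smul, inv_mul_cancel₀ ha, one_smul]
    module
  have := h (-(a⁻¹ * k))
  rwa [hxy, norm_smul, norm_neg, norm_inv, Real.norm_eq_abs,
    le_inv_mul_iff₀ (abs_pos.mpr ha)] at this

theorem birkhoffOrthogonal_of_isLocalMin_norm {p : ℝ → E} {v : E} {s : ℝ}
    (hmin : IsLocalMin (fun t => ‖p t‖) s) (hp : HasDerivAt p v s) :
    BirkhoffOrthogonal (p s) v := by
  intro r
  set q : ℝ → E := fun τ => p (s + τ * r)
  have hline : HasDerivAt (fun τ : ℝ => s + τ * r) r 0 := by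
    simpa using ((hasDerivAt_id (0 : ℝ)).mul_const r).const_add s
  have hs : s + 0 * r = s := by simp
  have hq : HasDerivAt q (r • v) 0 := by
    rw [← hs] at hp
    exact hp.scomp 0 hline
  have hqmin : ∀ᶠ τ in 𝓝[>] (0 : ℝ), ‖p s‖ ≤ ‖q τ‖ := by
    have hto := hline.continuousAt.tendsto
    rw [hs] at hto
    exact nhdsWithin_le_nhds (hto.eventually hmin)
  set D : ℝ → E := fun τ => τ⁻¹ • (q τ - p s)
  have hD : Tendsto D (𝓝[>] 0) (𝓝 (r • v)) := by
    have := (hasDerivAt_iff_tendsto_slope.mp hq).mono_left (nhdsGT_le_nhdsNE (0 : ℝ))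
    exact this.congr fun τ => by simp [D, q, slope_def_module]
  have hlim : Tendsto (fun τ => ‖p s‖ - ‖D τ - r • v‖) (𝓝[>] 0) (𝓝 ‖p s‖) := by
    simpa using tendsto_const_nhds.sub (hD.sub_const (r • v)).norm
  refine le_of_tendsto hlim ?_
  filter_upwards [hqmin, Ioo_mem_nhdsGT one_pos] with τ hτmin hτ
  obtain ⟨hτ0, hτ1⟩ := hτ
  have hsplit : q τ = (1 - τ) • p s + τ • (p s + r • v) + τ • (D τ - r • v) := by
    simp only [D, smul_sub, smul_smul, mul_inv_cancel₀ hτ0.ne', one_smul]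
    module
  have hconv : ‖q τ‖ ≤ (1 - τ) * ‖p s‖ + τ * ‖p s + r • v‖ + τ * ‖D τ - r • v‖ := by
    rw [hsplit]
    refine (norm_add₃_le ..).trans ?_
    simp only [norm_smul, Real.norm_eq_abs, abs_of_pos hτ0, abs_of_pos (sub_pos.mpr hτ1), le_refl]
  nlinarith

end BirkhoffOrthogonal

section Basis

variable (b : Module.Basis (Fin 2) ℝ X)

theorem exists_continuousLinearEquiv_euclNorm_eq_norm :
    ∃ e : X ≃L[ℝ] EuclideanSpace ℝ (Fin 2), ∀ x, euclNorm b x = ‖e x‖ := by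
  have := b.finiteDimensional_of_finite
  refine ⟨b.equivFunL.trans (EuclideanSpace.equiv (Fin 2) ℝ).symm, fun x => ?_⟩
  simp [euclNorm, EuclideanSpace.norm_eq, Fin.sum_univ_two, Module.Basis.coord_apply]

theorem euclNorm_pos {x : X} (hx : x ≠ 0) : 0 < euclNorm b x := by
  obtain ⟨e, he⟩ := exists_continuousLinearEquiv_euclNorm_eq_norm b
  simpa [he] using hx

theorem euclNorm_inv_smul_self {x : X} (hx : x ≠ 0) :
    euclNorm b ((euclNorm b x)⁻¹ • x) = 1 := by
  have hpos := euclNorm_pos b hx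
  rw [euclNorm_smul, abs_inv, abs_of_pos hpos, inv_mul_cancel₀ hpos.ne']

theorem norm_div_euclNorm_mem_image {x : X} (hx : x ≠ 0) :
    ‖x‖ / euclNorm b x ∈ norm '' {y : X | euclNorm b y = 1} := by
  refine ⟨(euclNorm b x)⁻¹ • x, euclNorm_inv_smul_self b hx, ?_⟩
  rw [norm_smul, norm_inv, Real.norm_of_nonneg (euclNorm_pos b hx).le, inv_mul_eq_div]

theorem bddAbove_norm_image_euclNorm_eq_one :
    BddAbove (norm '' {x : X | euclNorm b x = 1}) := by
  obtain ⟨e, he⟩ := exists_continuousLinearEquiv_euclNorm_eq_norm b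
  refine ⟨‖(e.symm : EuclideanSpace ℝ (Fin 2) →L[ℝ] X)‖, ?_⟩
  rintro _ ⟨x, hx : euclNorm b x = 1, rfl⟩
  simpa [← he, hx] using (e.symm : EuclideanSpace ℝ (Fin 2) →L[ℝ] X).le_opNorm (e x)

theorem cConst_le_norm_div_euclNorm {x : X} (hx : x ≠ 0) :
    cConst b ≤ ‖x‖ / euclNorm b x :=
  csInf_le ⟨0, by rintro _ ⟨y, -, rfl⟩; positivity⟩ (norm_div_euclNorm_mem_image b hx)

theorem norm_div_euclNorm_le_CConst {x : X} (hx : x ≠ 0) :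
    ‖x‖ / euclNorm b x ≤ CConst b :=
  le_csSup (bddAbove_norm_image_euclNorm_eq_one b) (norm_div_euclNorm_mem_image b hx)

theorem norm_polarParam (t : ℝ) : ‖polarParam b t‖ = 1 := by
  have hne : expV b t ≠ 0 := fun h => by simpa [h, euclNorm] using euclNorm_expV b t
  simpa [polarParam] using norm_smul_inv_norm (𝕜 := ℝ) hne

theorem polarParam_ne_zero (t : ℝ) : polarParam b t ≠ 0 :=
  norm_ne_zero_iff.mp (by simp [norm_polarParam])

end Basis

theorem polarParam_alpha_beta_general (b : Module.Basis (Fin 2) ℝ X)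
    (t u α β : ℝ)
    (hu : DifferentiableAt ℝ (polarParam b) u)
    (heq : (euclNorm b (deriv (polarParam b) u))⁻¹ • deriv (polarParam b) u =
        α • ((euclNorm b (polarParam b u))⁻¹ • polarParam b u) +
        β • ((euclNorm b (polarParam b t))⁻¹ • polarParam b t)) :
    |α| ≤ ((CConst b + cConst b) / cConst b) * |β| := by
  set A := euclNorm b (polarParam b u)
  set B := euclNorm b (polarParam b t)
  have hA : 0 < A := euclNorm_pos b (polarParam_ne_zero b u)
  have hB : 0 < B := euclNorm_pos b (polarParam_ne_zero b t)
  have hcA : cConst b ≤ A⁻¹ := by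
    simpa [norm_polarParam] using cConst_le_norm_div_euclNorm b (polarParam_ne_zero b u)
  have hBC : B⁻¹ ≤ CConst b := by
    simpa [norm_polarParam] using norm_div_euclNorm_le_CConst b (polarParam_ne_zero b t)
  have horth : BirkhoffOrthogonal (polarParam b u) (deriv (polarParam b) u) :=
    birkhoffOrthogonal_of_isLocalMin_norm (by simpa [norm_polarParam] using isLocalMin_const)
      hu.hasDerivAt
  have hkey : |α| * A⁻¹ ≤ |β| * B⁻¹ := by
    have := horth.abs_mul_norm_le (by rw [heq, smul_smul, smul_smul])
    simpa [norm_polarParam, norm_smul, abs_mul, abs_of_pos hA, abs_of_pos hB] using this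
  have hαβ : |α| * cConst b ≤ |β| * CConst b := calc
    |α| * cConst b ≤ |α| * A⁻¹ := by gcongr
    _ ≤ |β| * B⁻¹ := hkey
    _ ≤ |β| * CConst b := by gcongr
  have hc := cConst_pos b
  rw [div_mul_eq_mul_div, le_div_iff₀ hc]
  linarith [mul_nonneg (abs_nonneg β) hc.le]

/-- If `p'(t)` is a positive multiple of `p(u)` and
`p'(u)/|p'(u)| = α·p(u)/|p(u)| + β·p(t)/|p(t)|`, then `|α| ≤ ((C+c)/c)·|β|`. -/
theorem polarParam_alpha_beta [CompleteSpace X] (b : Module.Basis (Fin 2) ℝ X)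
    (t u α β lam : ℝ)
    (ht : DifferentiableAt ℝ (polarParam b) t)
    (hu : DifferentiableAt ℝ (polarParam b) u)
    (hlam : 0 < lam)
    (hpar : deriv (polarParam b) t = lam • polarParam b u)
    (heq : (euclNorm b (deriv (polarParam b) u))⁻¹ • deriv (polarParam b) u =
        α • ((euclNorm b (polarParam b u))⁻¹ • polarParam b u) +
        β • ((euclNorm b (polarParam b t))⁻¹ • polarParam b t)) :
    |α| ≤ ((CConst b + cConst b) / cConst b) * |β| :=
  polarParam_alpha_beta_general b t u α β hu heq

end
end
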